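/- Let A be the integer matrix [[-12,-5],[-5,-4]] (a 2×2 symmetric matrix over ℤ). Then for every vector v ∈ ℤ², the value vᵀ A v is neither -2 nor 2. In other words, the integral lattice with Gram matrix A contains no class of square ±2. -/

import Mathlib

open Matrix

/-- The Gram matrix of the intersection form on `H₂` of the double branched cover `X₀`. -/
def A : Matrix (Fin 2) (Fin 2) ℤ := !![-12, -5; -5, -4]

theorem dotProduct_mulVec_self_fin_two {R : Type*} [CommRing R] (M : Matrix (Fin 2) (Fin 2) R)
    (v : Fin 2 → R) :
    v ⬝ᵥ M *ᵥ v = M 0 0 * v 0 ^ 2 + (M 0 1 + M 1 0) * v 0 * v 1 + M 1 1 * v 1 ^ 2 := by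
  simp only [dotProduct, mulVec, Fin.sum_univ_two]
  ring

-- `6m² + 5mn + 2n²` has discriminant `-23`; completing the square gives
-- `8 (6m² + 5mn + 2n²) = (5m + 4n)² + 23m²`.
theorem six_sq_add_five_mul_add_two_sq_nonneg (m n : ℤ) :
    0 ≤ 6 * m ^ 2 + 5 * m * n + 2 * n ^ 2 := by
  nlinarith [sq_nonneg (5 * m + 4 * n), sq_nonneg m]

theorem six_sq_add_five_mul_add_two_sq_ne_one (m n : ℤ) :
    6 * m ^ 2 + 5 * m * n + 2 * n ^ 2 ≠ 1 := by
  intro h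
  have hsq : (5 * m + 4 * n) ^ 2 + 23 * m ^ 2 = 8 := by linear_combination 8 * h
  have hm : m = 0 := by
    have : m ^ 2 < 1 := by nlinarith [sq_nonneg (5 * m + 4 * n)]
    nlinarith [sq_nonneg m]
  subst hm
  have h2 : 2 * n ^ 2 = 1 := by linarith
  omega

/-- The integral lattice with Gram matrix `A = [[-12,-5],[-5,-4]]` contains no class of
square `±2`: for every `v ∈ ℤ²`, `vᵀ A v` is neither `-2` nor `2`. -/
theorem stmt_1 (v : Fin 2 → ℤ) :
    v ⬝ᵥ A.mulVec v ≠ -2 ∧ v ⬝ᵥ A.mulVec v ≠ 2 := by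
  have hQ : v ⬝ᵥ A *ᵥ v = -2 * (6 * v 0 ^ 2 + 5 * v 0 * v 1 + 2 * v 1 ^ 2) := by
    rw [dotProduct_mulVec_self_fin_two]
    simp only [A, of_apply, cons_val', cons_val_zero, cons_val_one, empty_val', cons_val_fin_one]
    ring
  have hne := six_sq_add_five_mul_add_two_sq_ne_one (v 0) (v 1)
  have hnonneg := six_sq_add_five_mul_add_two_sq_nonneg (v 0) (v 1)
  rw [hQ]
  constructor <;> intro h <;> omega
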